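/- The function k ↦ (1−p)^k + (2/√π)·erfi(1 − (1−p)^k)·e^{−(erfi(1 − (1−p)^k))²} is strictly decreasing in k for 0 < p < 1, k ≥ 0 real. -/

import Mathlib

/-!
`erf x - 2 / √π * x * exp (-x ^ 2)` is the intercept at `0` of the tangent line to `erf` at `x`;
its derivative `2 / √π * 2 * x ^ 2 * exp (-x ^ 2)` vanishes only at `0`, so it is strictly
increasing. Substituting `u = erfi (1 - t)`, i.e. `t = 1 - erf u`, the map
`t ↦ t + 2 / √π * u * exp (-u ^ 2)` becomes `1` minus this intercept at `u`, and `u` decreases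
with `t`. Finally `k ↦ (1 - p) ^ k` is strictly decreasing with values in `(0, 1]` for `k ≥ 0`.
-/

noncomputable def erf (x : ℝ) : ℝ :=
  (2 / Real.sqrt Real.pi) * ∫ t in (0 : ℝ)..x, Real.exp (-t ^ 2)

open Real Set

lemma erf_hasDerivAt (x : ℝ) : HasDerivAt erf (2 / √π * exp (-x ^ 2)) x :=
  ((by fun_prop : Continuous fun t : ℝ => exp (-t ^ 2)).integral_hasStrictDerivAt 0 x
    ).hasDerivAt.const_mul _

lemma erf_strictMono : StrictMono erf :=
  strictMono_of_hasDerivAt_pos erf_hasDerivAt fun _ => by positivity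

lemma StrictMono.strictMonoOn_of_leftInvOn {α β : Type*} [LinearOrder α] [Preorder β]
    {f : α → β} {g : β → α} {s : Set β} (hf : StrictMono f) (hfg : LeftInvOn f g s) :
    StrictMonoOn g s := fun x hx y hy hxy =>
  hf.lt_iff_lt.1 (by rwa [hfg hx, hfg hy])

noncomputable def erfTangentIntercept (x : ℝ) : ℝ :=
  erf x - 2 / √π * x * exp (-x ^ 2)

lemma hasDerivAt_erfTangentIntercept (x : ℝ) :
    HasDerivAt erfTangentIntercept (2 / √π * (2 * x ^ 2 * exp (-x ^ 2))) x := by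
  have hexp : HasDerivAt (fun x : ℝ => exp (-x ^ 2)) (exp (-x ^ 2) * -(2 * x)) x := by
    simpa using ((hasDerivAt_pow 2 x).neg).exp
  exact ((erf_hasDerivAt x).sub (((hasDerivAt_id' x).const_mul (2 / √π)).mul hexp)).congr_deriv
    (by ring)

lemma erfTangentIntercept_strictMono : StrictMono erfTangentIntercept := by
  have hcont : Continuous erfTangentIntercept :=
    continuous_iff_continuousAt.2 fun x => (hasDerivAt_erfTangentIntercept x).continuousAt
  have hderiv {D : Set ℝ} (hD : Convex ℝ D) (h0 : (0 : ℝ) ∉ interior D) :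
      StrictMonoOn erfTangentIntercept D :=
    strictMonoOn_of_hasDerivWithinAt_pos hD hcont.continuousOn
      (fun x _ => (hasDerivAt_erfTangentIntercept x).hasDerivWithinAt)
      fun x hx => by
        have : x ≠ 0 := by rintro rfl; exact h0 hx
        positivity
  rw [← strictMonoOn_univ, ← Iic_union_Ici (a := (0 : ℝ))]
  exact (hderiv (convex_Iic 0) (by simp)).union (hderiv (convex_Ici 0) (by simp))
    isGreatest_Iic isLeast_Ici

lemma strictMonoOn_self_add_erfi_mul_exp {erfi : ℝ → ℝ}
    (hinv : LeftInvOn erf erfi (Ioo (-1) 1)) :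
    StrictMonoOn (fun t : ℝ => t + 2 / √π * erfi (1 - t) * exp (-(erfi (1 - t)) ^ 2))
      (Ioo 0 2) := by
  have hmem {t : ℝ} (ht : t ∈ Ioo (0 : ℝ) 2) : 1 - t ∈ Ioo (-1 : ℝ) 1 :=
    ⟨by linarith [ht.2], by linarith [ht.1]⟩
  have hanti : StrictAntiOn (fun t => erfi (1 - t)) (Ioo 0 2) := fun s hs t ht hst =>
    erf_strictMono.strictMonoOn_of_leftInvOn hinv (hmem ht) (hmem hs) (by linarith)
  intro s hs t ht hst
  have hG := erfTangentIntercept_strictMono (hanti hs ht hst)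
  have hs' := hinv (hmem hs)
  have ht' := hinv (hmem ht)
  simp only [erfTangentIntercept] at hG
  linarith

/-- For 0 < p < 1, the function
k ↦ (1−p)^k + (2/√π)·erfi(1−(1−p)^k)·e^{−erfi(1−(1−p)^k)²}
is strictly decreasing in the real variable k ≥ 0; equivalently, the map
t ↦ t + (2/√π)·erfi(1−t)·e^{−erfi(1−t)²} is strictly increasing on (0,1). -/
theorem stmt_9 (p : ℝ) (hp : p ∈ Set.Ioo (0 : ℝ) 1)
    (erfi : ℝ → ℝ)
    (h_inv : ∀ y ∈ Set.Ioo (-1 : ℝ) 1, erf (erfi y) = y) :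
    StrictAntiOn (fun k : ℝ =>
        (1 - p) ^ k + (2 / Real.sqrt Real.pi) * erfi (1 - (1 - p) ^ k) *
          Real.exp (-(erfi (1 - (1 - p) ^ k)) ^ 2)) (Set.Ici 0) ∧
    StrictMonoOn (fun t : ℝ =>
        t + (2 / Real.sqrt Real.pi) * erfi (1 - t) *
          Real.exp (-(erfi (1 - t)) ^ 2)) (Set.Ioo 0 1) := by
  obtain ⟨hp0, hp1⟩ := hp
  have hmono := strictMonoOn_self_add_erfi_mul_exp fun y hy => h_inv y hy
  have hpow : MapsTo (fun k : ℝ => (1 - p) ^ k) (Ici 0) (Ioo 0 2) := fun k hk =>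
    ⟨rpow_pos_of_pos (by linarith) k,
      (rpow_le_one (by linarith) (by linarith) hk).trans_lt one_lt_two⟩
  exact ⟨hmono.comp_strictAntiOn
      ((strictAnti_rpow_of_base_lt_one (by linarith) (by linarith)).strictAntiOn _) hpow,
    hmono.mono (Ioo_subset_Ioo_right one_le_two)⟩
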